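/- arXiv:1801.09118 — 2 statements merged into one kernel-verified Lean document; each statement's English description precedes it below -/
import Mathlib

section
/- Let γ = 2 − √2, so that 1+(1−γ)² = 4−2√2, γ(1−γ) = 3√2−4, γ²−2 = 4−4√2 and 2(2−γ) = 2√2. Then for every y ∈ ℝ, |(3√2−4)(iy)² + (4−4√2)(iy) + 2√2|² − |(4−2√2)(iy) + 2√2|² = (3√2−4)²·y⁴. In particular |R(iy)| ≤ 1 for all real y, with strict inequality for y ≠ 0. -/
/-!
On the imaginary axis, `|den(iy)|² − |num(iy)|²` is a polynomial in `y²` whose `y²`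
coefficient vanishes identically in `γ`, leaving `γ²(1−γ)² y⁴ ≥ 0`. Hence `|R(iy)| ≤ 1`
for every `γ`, strictly when `y ≠ 0` and `γ ∉ {0, 1}`. For `γ = 2 − √2` the coefficients
reduce to the stated ones via `√2² = 2`.
-/

open Complex

namespace TRBDF2

def numerator (γ : ℝ) (z : ℂ) : ℂ :=
  ((1 + (1 - γ) ^ 2 : ℝ) : ℂ) * z + ((2 * (2 - γ) : ℝ) : ℂ)

def denominator (γ : ℝ) (z : ℂ) : ℂ :=
  ((γ * (1 - γ) : ℝ) : ℂ) * z ^ 2 + ((γ ^ 2 - 2 : ℝ) : ℂ) * z + ((2 * (2 - γ) : ℝ) : ℂ)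

lemma sq_norm_numerator_I_mul (γ y : ℝ) :
    ‖numerator γ (I * y)‖ ^ 2 = (2 * (2 - γ)) ^ 2 + ((1 + (1 - γ) ^ 2) * y) ^ 2 := by
  rw [Complex.sq_norm, Complex.normSq_apply]
  simp only [numerator, add_re, add_im, mul_re, mul_im, ofReal_re, ofReal_im, I_re, I_im]
  ring

lemma sq_norm_denominator_I_mul (γ y : ℝ) :
    ‖denominator γ (I * y)‖ ^ 2
      = (2 * (2 - γ) - γ * (1 - γ) * y ^ 2) ^ 2 + ((γ ^ 2 - 2) * y) ^ 2 := by
  rw [Complex.sq_norm, Complex.normSq_apply]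
  simp only [denominator, pow_two, add_re, add_im, mul_re, mul_im, ofReal_re, ofReal_im,
    I_re, I_im]
  ring

theorem sq_norm_denominator_sub_sq_norm_numerator (γ y : ℝ) :
    ‖denominator γ (I * y)‖ ^ 2 - ‖numerator γ (I * y)‖ ^ 2 = (γ * (1 - γ)) ^ 2 * y ^ 4 := by
  rw [sq_norm_denominator_I_mul, sq_norm_numerator_I_mul]
  ring

theorem norm_numerator_div_denominator_le_one (γ y : ℝ) :
    ‖numerator γ (I * y) / denominator γ (I * y)‖ ≤ 1 := by
  have hsq : ‖numerator γ (I * y)‖ ^ 2 ≤ ‖denominator γ (I * y)‖ ^ 2 := by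
    nlinarith [sq_norm_denominator_sub_sq_norm_numerator γ y, sq_nonneg (γ * (1 - γ) * y ^ 2)]
  rw [norm_div]
  exact div_le_one_of_le₀
    ((pow_le_pow_iff_left₀ (norm_nonneg _) (norm_nonneg _) two_ne_zero).1 hsq) (norm_nonneg _)

theorem norm_numerator_div_denominator_lt_one {γ y : ℝ} (hγ : γ * (1 - γ) ≠ 0) (hy : y ≠ 0) :
    ‖numerator γ (I * y) / denominator γ (I * y)‖ < 1 := by
  have hsq : ‖numerator γ (I * y)‖ ^ 2 < ‖denominator γ (I * y)‖ ^ 2 := by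
    have hpos : 0 < (γ * (1 - γ)) ^ 2 * y ^ 4 := by positivity
    linarith [sq_norm_denominator_sub_sq_norm_numerator γ y]
  have hlt := (pow_lt_pow_iff_left₀ (norm_nonneg _) (norm_nonneg _) two_ne_zero).1 hsq
  rw [norm_div, div_lt_one ((norm_nonneg _).trans_lt hlt)]
  exact hlt

lemma two_sub_sqrt_two_mul_one_sub : (2 - √2) * (1 - (2 - √2)) = 3 * √2 - 4 := by
  linear_combination -Real.sq_sqrt zero_le_two

lemma numerator_two_sub_sqrt_two (z : ℂ) :
    numerator (2 - √2) z = ((4 - 2 * √2 : ℝ) : ℂ) * z + ((2 * √2 : ℝ) : ℂ) := by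
  have h₁ : 1 + (1 - (2 - √2)) ^ 2 = 4 - 2 * √2 := by
    linear_combination Real.sq_sqrt zero_le_two
  rw [numerator, h₁, sub_sub_cancel]

lemma denominator_two_sub_sqrt_two (z : ℂ) :
    denominator (2 - √2) z = ((3 * √2 - 4 : ℝ) : ℂ) * z ^ 2 + ((4 - 4 * √2 : ℝ) : ℂ) * z
      + ((2 * √2 : ℝ) : ℂ) := by
  have h₂ : (2 - √2) ^ 2 - 2 = 4 - 4 * √2 := by
    linear_combination Real.sq_sqrt zero_le_two
  rw [denominator, two_sub_sqrt_two_mul_one_sub, h₂, sub_sub_cancel]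

end TRBDF2

/-- For `γ = 2 − √2`, on the imaginary axis the squared modulus of the
denominator of the TR-BDF2 stability function exceeds that of the numerator by
exactly `(3√2−4)² y⁴`; in particular `|R(iy)| ≤ 1` for all real `y`, with
strict inequality for `y ≠ 0`. -/
theorem trbdf2_imaginary_axis :
    (∀ y : ℝ,
      ‖(((3 * Real.sqrt 2 - 4 : ℝ) : ℂ) * (Complex.I * y) ^ 2
          + ((4 - 4 * Real.sqrt 2 : ℝ) : ℂ) * (Complex.I * y)
          + ((2 * Real.sqrt 2 : ℝ) : ℂ))‖ ^ 2
        - ‖(((4 - 2 * Real.sqrt 2 : ℝ) : ℂ) * (Complex.I * y)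
          + ((2 * Real.sqrt 2 : ℝ) : ℂ))‖ ^ 2
        = (3 * Real.sqrt 2 - 4) ^ 2 * y ^ 4) ∧
    (∀ y : ℝ,
      ‖((((4 - 2 * Real.sqrt 2 : ℝ) : ℂ) * (Complex.I * y)
            + ((2 * Real.sqrt 2 : ℝ) : ℂ)) /
          (((3 * Real.sqrt 2 - 4 : ℝ) : ℂ) * (Complex.I * y) ^ 2
            + ((4 - 4 * Real.sqrt 2 : ℝ) : ℂ) * (Complex.I * y)
            + ((2 * Real.sqrt 2 : ℝ) : ℂ)))‖ ≤ 1) ∧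
    (∀ y : ℝ, y ≠ 0 →
      ‖((((4 - 2 * Real.sqrt 2 : ℝ) : ℂ) * (Complex.I * y)
            + ((2 * Real.sqrt 2 : ℝ) : ℂ)) /
          (((3 * Real.sqrt 2 - 4 : ℝ) : ℂ) * (Complex.I * y) ^ 2
            + ((4 - 4 * Real.sqrt 2 : ℝ) : ℂ) * (Complex.I * y)
            + ((2 * Real.sqrt 2 : ℝ) : ℂ)))‖ < 1) := by
  have hγ := TRBDF2.two_sub_sqrt_two_mul_one_sub
  simp only [← TRBDF2.numerator_two_sub_sqrt_two, ← TRBDF2.denominator_two_sub_sqrt_two]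
  refine ⟨fun y => ?_, fun y => TRBDF2.norm_numerator_div_denominator_le_one _ y,
    fun y hy => TRBDF2.norm_numerator_div_denominator_lt_one ?_ hy⟩
  · rw [TRBDF2.sq_norm_denominator_sub_sq_norm_numerator, hγ]
  · rw [hγ]
    nlinarith [Real.sq_sqrt (zero_le_two : (0 : ℝ) ≤ 2), Real.sqrt_nonneg 2]
end

section
/- Let γ = 2 − √2, d = γ/2, w = √2/4, and let b*₁ = (1−w)/3, b*₂ = (3w+1)/3, b*₃ = d/3. Define Rγ(z) = (2+γz)/(2−γz), R(z) = ((1+(1−γ)²)z + 2(2−γ)) / (γ(1−γ)z² + (γ²−2)z + 2(2−γ)), and the stability function of the embedded method R*(z) = 1 + z·(b*₁ + b*₂·Rγ(z) + b*₃·R(z)). Then (R*(z) − exp(z))/z³ tends to 0 as z → 0 in ℂ \ {0}; that is, the embedded companion formula of TR-BDF2 is third-order accurate. -/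
/-!
On the linear test problem the three stage values of TR-BDF2 are `1`, `Rγ(z)` and `R(z)`, and each
agrees with `exp (cᵢ z)` up to `O(z³)` for the abscissae `c = (0, γ, 1)`: `Rγ` is the trapezoidal
rule over a step `γ`, and `R` is a second-order method. Hence `1 + z ∑ bᵢ rᵢ(z)` agrees with `exp z`
up to `O(z⁴)` as soon as the weights integrate `1`, `t` and `t²` exactly on `[0, 1]`, which `b*`
does.
-/

open Filter Asymptotics Topology

section

variable {𝕜 : Type*} [NormedField 𝕜]

theorem isBigO_pow_of_eq_pow_mul_div {f p q : 𝕜 → 𝕜} {n : ℕ} (hp : ContinuousAt p 0)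
    (hq : ContinuousAt q 0) (hq₀ : q 0 ≠ 0) (hf : ∀ z, q z ≠ 0 → f z = z ^ n * (p z / q z)) :
    f =O[𝓝 0] (· ^ n) := by
  have hf' : (fun z => z ^ n * (p z / q z)) =ᶠ[𝓝 0] f := by
    filter_upwards [hq.eventually_ne hq₀] with z hz using (hf z hz).symm
  have hbound : (fun z => p z / q z) =O[𝓝 0] (fun _ => (1 : 𝕜)) :=
    (hp.div hq hq₀).tendsto.isBigO_one 𝕜
  simpa using ((isBigO_refl (fun z : 𝕜 => z ^ n) (𝓝 0)).mul hbound).congr' hf' .rfl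

theorem isBigO_stability_sub_cubic_of_order_conditions [CharZero 𝕜] {ι : Type*} [Fintype ι]
    (b c : ι → 𝕜) (r : ι → 𝕜 → 𝕜)
    (hr : ∀ i, (fun z => r i z - (1 + c i * z + (c i * z) ^ 2 / 2)) =O[𝓝 0] (· ^ 3))
    (hb₀ : ∑ i, b i = 1) (hb₁ : ∑ i, b i * c i = 1 / 2) (hb₂ : ∑ i, b i * c i ^ 2 = 1 / 3) :
    (fun z => 1 + z * ∑ i, b i * r i z - (1 + z + z ^ 2 / 2 + z ^ 3 / 6)) =O[𝓝 0] (· ^ 4) := by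
  have key : ∀ z, 1 + z * ∑ i, b i * r i z - (1 + z + z ^ 2 / 2 + z ^ 3 / 6)
      = z * ∑ i, b i * (r i z - (1 + c i * z + (c i * z) ^ 2 / 2)) := by
    intro z
    have : ∑ i, b i * (1 + c i * z + (c i * z) ^ 2 / 2)
        = ∑ i, b i + (∑ i, b i * c i) * z + (∑ i, b i * c i ^ 2) * z ^ 2 / 2 := by
      simp only [Finset.sum_mul, Finset.sum_div, ← Finset.sum_add_distrib]
      exact Finset.sum_congr rfl fun i _ => by ring
    simp only [mul_sub, Finset.sum_sub_distrib, this, hb₀, hb₁, hb₂]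
    ring
  have hsum := IsBigO.sum fun i (_ : i ∈ Finset.univ) => (hr i).const_mul_left (b i)
  simpa [key, ← pow_succ'] using (isBigO_refl (fun z : 𝕜 => z) (𝓝 0)).mul hsum

def trapezoidalStability (γ z : 𝕜) : 𝕜 := (2 + γ * z) / (2 - γ * z)

def trbdf2Stability (γ z : 𝕜) : 𝕜 :=
  ((1 + (1 - γ) ^ 2) * z + 2 * (2 - γ)) / (γ * (1 - γ) * z ^ 2 + (γ ^ 2 - 2) * z + 2 * (2 - γ))

variable [CharZero 𝕜]

theorem trapezoidalStability_sub_quadratic_isBigO (γ : 𝕜) :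
    (fun z => trapezoidalStability γ z - (1 + γ * z + (γ * z) ^ 2 / 2)) =O[𝓝 0] (· ^ 3) := by
  refine isBigO_pow_of_eq_pow_mul_div (p := fun _ => γ ^ 3 / 2) (q := fun z => 2 - γ * z)
    (by fun_prop) (by fun_prop) (by simp) fun z hz => ?_
  simp only [trapezoidalStability]
  field_simp
  ring

theorem trbdf2Stability_sub_quadratic_isBigO {γ : 𝕜} (hγ : γ ≠ 2) :
    (fun z => trbdf2Stability γ z - (1 + z + z ^ 2 / 2)) =O[𝓝 0] (· ^ 3) := by
  refine isBigO_pow_of_eq_pow_mul_div (p := fun z => (2 - 2 * γ + γ ^ 2 - γ * (1 - γ) * z) / 2)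
    (q := fun z => γ * (1 - γ) * z ^ 2 + (γ ^ 2 - 2) * z + 2 * (2 - γ))
    (by fun_prop) (by fun_prop) (by simpa [sub_eq_zero] using hγ.symm) fun z hz => ?_
  rw [trbdf2Stability, mul_div_assoc', eq_div_iff hz, sub_mul, div_mul_cancel₀ _ hz]
  ring

end

theorem Complex.exp_sub_cubic_isLittleO :
    (fun z => exp z - (1 + z + z ^ 2 / 2 + z ^ 3 / 6)) =o[𝓝 0] (· ^ 3) := by
  simpa [Finset.sum_range_succ, Nat.factorial, div_eq_mul_inv, add_assoc] using
    exp_sub_sum_range_succ_isLittleO_pow 3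

theorem trbdf2_embedded_order_conditions {γ b₁ b₂ b₃ : ℝ} (hγ : γ = 2 - √2)
    (hb₁ : b₁ = (1 - √2 / 4) / 3) (hb₂ : b₂ = (3 * (√2 / 4) + 1) / 3) (hb₃ : b₃ = γ / 2 / 3) :
    b₁ + b₂ + b₃ = 1 ∧ b₂ * γ + b₃ = 1 / 2 ∧ b₂ * γ ^ 2 + b₃ = 1 / 3 := by
  subst hγ hb₁ hb₂ hb₃
  have h : √2 ^ 2 = 2 := Real.sq_sqrt zero_le_two
  exact ⟨by ring, by linear_combination (-1/4 : ℝ) * h, by linear_combination (√2 / 4 - 2/3) * h⟩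

/-- Third-order accuracy of the embedded companion of TR-BDF2 on the linear
test problem: with `γ = 2 − √2`, `d = γ/2`, `w = √2/4`, the embedded stability
function `R*(z) = 1 + z(b*₁ + b*₂ Rγ(z) + b*₃ R(z))` satisfies
`(R*(z) − e^z)/z³ → 0` as `z → 0`, `z ≠ 0`. -/
theorem trbdf2_embedded_third_order (γ d w b₁ b₂ b₃ : ℝ)
    (hγ : γ = 2 - Real.sqrt 2) (hd : d = γ / 2) (hw : w = Real.sqrt 2 / 4)
    (hb₁ : b₁ = (1 - w) / 3) (hb₂ : b₂ = (3 * w + 1) / 3) (hb₃ : b₃ = d / 3)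
    (Rγ R Rstar : ℂ → ℂ)
    (hRγ : ∀ z : ℂ, Rγ z = (2 + (γ : ℂ) * z) / (2 - (γ : ℂ) * z))
    (hR : ∀ z : ℂ, R z = ((1 + (1 - (γ : ℂ)) ^ 2) * z + 2 * (2 - (γ : ℂ))) /
        ((γ : ℂ) * (1 - (γ : ℂ)) * z ^ 2 + ((γ : ℂ) ^ 2 - 2) * z + 2 * (2 - (γ : ℂ))))
    (hRstar : ∀ z : ℂ, Rstar z = 1 + z * ((b₁ : ℂ) + (b₂ : ℂ) * Rγ z + (b₃ : ℂ) * R z)) :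
    Tendsto (fun z : ℂ => (Rstar z - Complex.exp z) / z ^ 3)
      (nhdsWithin 0 {0}ᶜ) (nhds 0) := by
  subst hw hd
  obtain ⟨hsum, hsumc, hsumc2⟩ := trbdf2_embedded_order_conditions hγ hb₁ hb₂ hb₃
  have hγ₂ : (γ : ℂ) ≠ 2 := by simp [hγ]
  obtain rfl : Rγ = trapezoidalStability (γ : ℂ) := funext hRγ
  obtain rfl : R = trbdf2Stability (γ : ℂ) := funext hR
  have hstages : ∀ i : Fin 3,
      (fun z => ![fun _ => 1, trapezoidalStability (γ : ℂ), trbdf2Stability (γ : ℂ)] i z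
        - (1 + ![0, (γ : ℂ), 1] i * z + (![0, (γ : ℂ), 1] i * z) ^ 2 / 2)) =O[𝓝 0] (· ^ 3) := by
    intro i
    fin_cases i
    · simpa using isBigO_zero _ _
    · simpa using trapezoidalStability_sub_quadratic_isBigO (γ : ℂ)
    · simpa using trbdf2Stability_sub_quadratic_isBigO hγ₂
  have hRstar_cubic := isBigO_stability_sub_cubic_of_order_conditions ![(b₁ : ℂ), b₂, b₃]
    ![0, (γ : ℂ), 1] _ hstages (by simpa [Fin.sum_univ_three] using congrArg Complex.ofReal hsum)
    (by simpa [Fin.sum_univ_three] using congrArg Complex.ofReal hsumc)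
    (by simpa [Fin.sum_univ_three] using congrArg Complex.ofReal hsumc2)
  have hRstar_taylor : (fun z => Rstar z - (1 + z + z ^ 2 / 2 + z ^ 3 / 6)) =o[𝓝 0] (· ^ 3) := by
    simpa [Fin.sum_univ_three, hRstar] using
      hRstar_cubic.trans_isLittleO (isLittleO_pow_pow (by norm_num : 3 < 4))
  have herror : (fun z => Rstar z - Complex.exp z) =o[𝓝 0] (· ^ 3) := by
    simpa using hRstar_taylor.sub Complex.exp_sub_cubic_isLittleO
  exact herror.tendsto_div_nhds_zero.mono_left nhdsWithin_le_nhds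
end
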